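/- Let D, E be linear operators on a complex vector space V and v₂ ∈ V with (β·D − δ·E + id)v₂ = 0. Let v ∈ ℂ satisfy δv² − (p−q+δ−β)v − β = 0. Then K(|ω(v)⟩v₂) = δ(v−1)·(|ω(v)⟩v₂) − |t̄(v)⟩v₂, as an identity of pairs of vectors in V. -/

import Mathlib

open scoped BigOperators

noncomputable section

/-- The bulk matrix `w` of the open ASEP, with rows/columns indexed by
`(τ, τ') ∈ Fin 2 × Fin 2` in the order `(0,0), (0,1), (1,0), (1,1)`. -/
def wB (p q : ℂ) : Fin 2 × Fin 2 → Fin 2 × Fin 2 → ℂ := fun r c =>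
  if r = (0, 1) ∧ c = (0, 1) then -q
  else if r = (0, 1) ∧ c = (1, 0) then p
  else if r = (1, 0) ∧ c = (0, 1) then q
  else if r = (1, 0) ∧ c = (1, 0) then -p
  else 0

/-- `[u] = (1 − u)/(q − p)`. -/
def br (p q u : ℂ) : ℂ := (1 - u) / (q - p)

/-- The operator pair `|ω(u)⟩ = (E − [u]·id, u·D + [u]·id)`. -/
def omegaPair {V : Type*} [AddCommGroup V] [Module ℂ V]
    (p q : ℂ) (D E : Module.End ℂ V) (u : ℂ) : Fin 2 → Module.End ℂ V :=
  fun i => if i = 0 then E - br p q u • 1 else u • D + br p q u • 1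

/-- The operator pair `|t(u)⟩ = (u·id, −id)`. -/
def tPair {V : Type*} [AddCommGroup V] [Module ℂ V] (u : ℂ) :
    Fin 2 → Module.End ℂ V :=
  fun i => if i = 0 then u • 1 else -1

/-- The operator pair `|t̄(u)⟩ = (0, (p−q)(u·D + [u]·id))`. -/
def tbarPair {V : Type*} [AddCommGroup V] [Module ℂ V]
    (p q : ℂ) (D : Module.End ℂ V) (u : ℂ) : Fin 2 → Module.End ℂ V :=
  fun i => if i = 0 then 0 else (p - q) • (u • D + br p q u • 1)

/-- Tensor product of two operator pairs, `(a,b)⊗(a′,b′) = (aa′, ab′, ba′, bb′)`,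
with noncommutative ordered products. -/
def tensP {V : Type*} [AddCommGroup V] [Module ℂ V]
    (x y : Fin 2 → Module.End ℂ V) : Fin 2 × Fin 2 → Module.End ℂ V :=
  fun rc => x rc.1 * y rc.2

/-- Action of the `4×4` scalar matrix `w` on a 4-tuple of operators. -/
def wAct {V : Type*} [AddCommGroup V] [Module ℂ V]
    (p q : ℂ) (X : Fin 2 × Fin 2 → Module.End ℂ V) : Fin 2 × Fin 2 → Module.End ℂ V :=
  fun r => ∑ c : Fin 2 × Fin 2, wB p q r c • X c

/-- The right boundary matrix `K = [[−δ, β], [δ, −β]]`. -/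
def KB (β δ : ℂ) : Fin 2 → Fin 2 → ℂ := fun i j =>
  if i = 0 then (if j = 0 then -δ else β) else (if j = 0 then δ else -β)

/-- The left boundary matrix `K̂ = [[−α, γe^{−s}], [αe^s, −γ]]`. -/
def KhatB (α γ s : ℂ) : Fin 2 → Fin 2 → ℂ := fun i j =>
  if i = 0 then (if j = 0 then -α else γ * Complex.exp (-s))
  else (if j = 0 then α * Complex.exp s else -γ)

/-- Componentwise action of a `2×2` scalar matrix on a pair of elements of a `ℂ`-module. -/
def mat2VecAct {V : Type*} [AddCommGroup V] [Module ℂ V]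
    (M : Fin 2 → Fin 2 → ℂ) (x : Fin 2 → V) : Fin 2 → V :=
  fun i => ∑ j : Fin 2, M i j • x j

/-- `c₊(x,y) = y/x` and `c₋(x,y) = −1`; the sign `+` is encoded as `true`. -/
def ccB (e : Bool) (x y : ℂ) : ℂ := if e then y / x else -1

/-- `λ₊(x,y) = 0` and `λ₋(x,y) = −x−y`; the sign `+` is encoded as `true`. -/
def lamB (e : Bool) (x y : ℂ) : ℂ := if e then 0 else -x - y

/- The pair `K x` has second entry `-(K x)₀`, so the claim amounts to two linear relations
between the entries `a, b` of `|ω(v)⟩v₂`: `δv·a = β·b`, and `δ(v-1)·a + (δ(v-1) - (p-q))·b = 0`.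
Both follow from `(δE - βD)v₂ = v₂`, from `(p-q)[v] = v - 1`, and from the quadratic
equation for `v`. -/

theorem sub_mul_br (p q u : ℂ) (hpq : p ≠ q) : (p - q) * br p q u = u - 1 := by
  have : q - p ≠ 0 := sub_ne_zero.mpr hpq.symm
  unfold br
  field_simp
  ring

section KB

variable {V : Type*} [AddCommGroup V] [Module ℂ V]

theorem mat2VecAct_KB_zero (β δ : ℂ) (x : Fin 2 → V) :
    mat2VecAct (KB β δ) x 0 = β • x 1 - δ • x 0 := by
  simp [mat2VecAct, KB, Fin.sum_univ_two, neg_smul, neg_add_eq_sub]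

theorem mat2VecAct_KB_one (β δ : ℂ) (x : Fin 2 → V) :
    mat2VecAct (KB β δ) x 1 = δ • x 0 - β • x 1 := by
  simp [mat2VecAct, KB, Fin.sum_univ_two, neg_smul, sub_eq_add_neg]

end KB

section Omega

variable {V : Type*} [AddCommGroup V] [Module ℂ V] {p q β δ v : ℂ} {D E : Module.End ℂ V}
  {v₂ : V}

theorem omegaPair_zero_apply (x : V) :
    omegaPair p q D E v 0 x = E x - br p q v • x := by
  simp [omegaPair]

theorem omegaPair_one_apply (x : V) :
    omegaPair p q D E v 1 x = v • D x + br p q v • x := by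
  simp [omegaPair]

theorem tbarPair_zero_apply (x : V) : tbarPair p q D v 0 x = 0 := by
  simp [tbarPair]

theorem tbarPair_one_apply (x : V) :
    tbarPair p q D v 1 x = (p - q) • omegaPair p q D E v 1 x := by
  simp [tbarPair, omegaPair]

variable (hright : β • D v₂ - δ • E v₂ + v₂ = 0)
  (hv : δ * v ^ 2 - (p - q + δ - β) * v - β = 0)
include hright hv

theorem smul_omegaPair_zero_eq (hpq : p ≠ q) :
    (δ * v) • omegaPair p q D E v 0 v₂ = β • omegaPair p q D E v 1 v₂ := by
  have key : (δ * v + β) * br p q v = v := mul_left_cancel₀ (sub_ne_zero.mpr hpq) <| by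
    linear_combination (δ * v + β) * sub_mul_br p q v hpq + hv
  rw [omegaPair_zero_apply, omegaPair_one_apply]
  linear_combination (norm := module) -v • hright - key • v₂

theorem smul_omegaPair_zero_add_smul_omegaPair_one_eq_zero (hpq : p ≠ q) :
    (δ * (v - 1)) • omegaPair p q D E v 0 v₂ +
      (δ * (v - 1) - (p - q)) • omegaPair p q D E v 1 v₂ = 0 := by
  rw [omegaPair_zero_apply, omegaPair_one_apply]
  linear_combination (norm := module) (1 - v) • hright + hv • D v₂ - sub_mul_br p q v hpq • v₂

end Omega

theorem statement14_general (p q β δ : ℂ) (hpq : p ≠ q)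
    {V : Type*} [AddCommGroup V] [Module ℂ V]
    (D E : Module.End ℂ V) (v₂ : V)
    (hright : (β • D - δ • E + 1) v₂ = 0)
    (v : ℂ) (hv : δ * v ^ 2 - (p - q + δ - β) * v - β = 0) :
    mat2VecAct (KB β δ) (fun i => omegaPair p q D E v i v₂) =
      fun i => (δ * (v - 1)) • omegaPair p q D E v i v₂ - tbarPair p q D v i v₂ := by
  have hright' : β • D v₂ - δ • E v₂ + v₂ = 0 := by simpa using hright
  have h₀ := smul_omegaPair_zero_eq hright' hv hpq
  have h₁ := smul_omegaPair_zero_add_smul_omegaPair_one_eq_zero hright' hv hpq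
  refine funext (Fin.forall_fin_two.mpr ⟨?_, ?_⟩)
  · rw [mat2VecAct_KB_zero, tbarPair_zero_apply]
    linear_combination (norm := module) -h₀
  · rw [mat2VecAct_KB_one, tbarPair_one_apply (E := E)]
    linear_combination (norm := module) h₀ - h₁

/-- With `(βD − δE + id)v₂ = 0` and `δv² − (p−q+δ−β)v − β = 0`, one has
`K(|ω(v)⟩v₂) = δ(v−1)·(|ω(v)⟩v₂) − |t̄(v)⟩v₂`. -/
theorem statement14 (p q β δ : ℂ) (hp : p ≠ 0) (hq : q ≠ 0) (hpq : p ≠ q)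
    {V : Type*} [AddCommGroup V] [Module ℂ V]
    (D E : Module.End ℂ V) (v₂ : V)
    (hright : (β • D - δ • E + 1) v₂ = 0)
    (v : ℂ) (hv : δ * v ^ 2 - (p - q + δ - β) * v - β = 0) :
    mat2VecAct (KB β δ) (fun i => omegaPair p q D E v i v₂) =
      fun i => (δ * (v - 1)) • omegaPair p q D E v i v₂ - tbarPair p q D v i v₂ :=
  statement14_general p q β δ hpq D E v₂ hright v hv
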